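/- arXiv:math/0607799 — 2 statements merged into one kernel-verified Lean document; each statement's English description precedes it below -/
import Mathlib

section
/- Under Assumption 1, the time-varying Volterra series X_{t,N}² = a_0(t/N) Z_t² + Σ_{k≥1} Σ_{j_k<⋯<j_1<j_0=t} g_{t,N}(k, j_0,…,j_k) Π_{i=0}^k Z_{j_i}², where g_{t,N}(k, j_0,…,j_k) = a_0(j_k/N) Π_{i=1}^k a_{(j_{i−1}−j_i)}(j_{i−1}/N), converges almost surely for every t and N, satisfies E(X_{t,N}²) ≤ sup_u a_0(u)·[1 + Σ_{k=1}^∞ (1−ν)^k] < ∞ uniformly in t and N, is a causal solution of the tvARCH(∞) equations, and is almost surely the unique causal solution among all causal solutions Y_{t,N}² with sup_{t,N} E(Y_{t,N}²) < ∞. -/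
open MeasureTheory ProbabilityTheory Filter Set
open scoped ENNReal NNReal Topology

noncomputable section

/-- `volIdx t d i` is the index `j_i = t - (d 0 + ⋯ + d (i-1))` determined by the gaps `d`. -/
def volIdx (t : ℤ) {k : ℕ} (d : Fin k → ℕ+) (i : ℕ) : ℤ :=
  t - ∑ s ∈ Finset.univ.filter (fun s : Fin k => (s : ℕ) < i), ((d s : ℕ) : ℤ)

/-- time-varying Volterra coefficient `g_{t,N}(k, j_0,…,j_k)` written in terms of the gaps. -/
def volCoef (a : ℕ → ℝ → ℝ) (N : ℕ) (t : ℤ) {k : ℕ} (d : Fin k → ℕ+) : ℝ :=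
  a 0 (((volIdx t d k : ℤ) : ℝ) / N) *
    ∏ i : Fin k, a (d i : ℕ) (((volIdx t d (i : ℕ) : ℤ) : ℝ) / N)

/-- stationary Volterra coefficient `g̃_u(k, j_0,…,j_k)`. -/
def volCoefStat (a : ℕ → ℝ → ℝ) (u : ℝ) {k : ℕ} (d : Fin k → ℕ+) : ℝ :=
  a 0 u * ∏ i : Fin k, a (d i : ℕ) u

/-- the product `Π_{i=0}^k Z_{j_i}^2`. -/
def volZprod {Ω : Type*} (Z : ℤ → Ω → ℝ) (t : ℤ) {k : ℕ} (d : Fin k → ℕ+) (ω : Ω) : ℝ :=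
  ∏ i ∈ Finset.range (k + 1), (Z (volIdx t d i) ω) ^ 2

/-- the time-varying Volterra series for `X_{t,N}²`. -/
def volX2 {Ω : Type*} (a : ℕ → ℝ → ℝ) (Z : ℤ → Ω → ℝ) (N : ℕ) (t : ℤ) (ω : Ω) : ℝ :=
  a 0 ((t : ℝ) / N) * (Z t ω) ^ 2 +
    ∑' k : ℕ, ∑' d : Fin (k + 1) → ℕ+, volCoef a N t d * volZprod Z t d ω

/-- the stationary Volterra series for `X̃_t(u)²`. -/
def volX2stat {Ω : Type*} (a : ℕ → ℝ → ℝ) (Z : ℤ → Ω → ℝ) (u : ℝ) (t : ℤ) (ω : Ω) : ℝ :=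
  a 0 u * (Z t ω) ^ 2 +
    ∑' k : ℕ, ∑' d : Fin (k + 1) → ℕ+, volCoefStat a u d * volZprod Z t d ω

/-- the process `U_t`. -/
def volU {Ω : Type*} (Q : ℝ) (ℓ : ℕ → ℝ) (Z : ℤ → Ω → ℝ) (t : ℤ) (ω : Ω) : ℝ :=
  (Z t ω) ^ 2 + ∑' k : ℕ, ∑' d : Fin (k + 1) → ℕ+,
    Q ^ k * (((k : ℝ) + 1) * (∑ i, ((d i : ℕ) : ℝ)) / ∏ i, ℓ (d i : ℕ)) * volZprod Z t d ω

/-- Assumption 1 of Dahlhaus–Subba Rao (2006). -/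
structure Assumption1 (a : ℕ → ℝ → ℝ) (ρ Q M ν : ℝ) (ℓ : ℕ → ℝ) : Prop where
  ρ_pos : 0 < ρ
  Q_pos : 0 < Q
  M_pos : 0 < M
  ν_pos : 0 < ν
  ν_lt_one : ν < 1
  ℓ_pos : ∀ j : ℕ, 1 ≤ j → 0 < ℓ j
  a_nonneg : ∀ j u, 0 ≤ a j u
  a_causal : ∀ (j : ℕ) (u : ℝ), u < 0 → a j u = 0
  a0_lower : ∀ u : ℝ, 0 ≤ u → ρ < a 0 u
  a_upper : ∀ j : ℕ, 1 ≤ j → ∀ u, a j u ≤ Q / ℓ j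
  summable_inv : Summable fun j : ℕ+ => 1 / ℓ j
  sum_bound : Q * (∑' j : ℕ+, 1 / ℓ j) ≤ 1 - ν
  lipschitz : ∀ j : ℕ, 1 ≤ j → ∀ u v : ℝ, 0 ≤ u → 0 ≤ v →
    |a j u - a j v| ≤ M * |u - v| / ℓ j
  lipschitz0 : ∀ u v : ℝ, 0 ≤ u → 0 ≤ v → |a 0 u - a 0 v| ≤ M * |u - v|
  summable_jdiv : Summable fun j : ℕ+ => ((j : ℕ) : ℝ) / ℓ j

/-- i.i.d. innovations with mean zero and unit variance. -/
structure IIDNoise {Ω : Type*} [MeasureSpace Ω] (Z : ℤ → Ω → ℝ) : Prop where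
  meas : ∀ t, Measurable (Z t)
  indep : iIndepFun Z ℙ
  ident : ∀ t : ℤ, IdentDistrib (Z t) (Z 0) ℙ ℙ
  integrable : Integrable (Z 0) ℙ
  sq_integrable : Integrable (fun ω => (Z 0 ω) ^ 2) ℙ
  mean_zero : ∫ ω, Z 0 ω ∂ℙ = 0
  var_one : ∫ ω, (Z 0 ω) ^ 2 ∂ℙ = 1

/-- the compact parameter set Ω of Assumption 2(iii). -/
def OmegaSet (p : ℕ) (ρ₁ ρ₂ : ℝ) : Set (Fin (p + 1) → ℝ) :=
  {α | (∑ i ∈ Finset.univ.erase (0 : Fin (p + 1)), α i) ≤ 1 ∧ ρ₁ ≤ α 0 ∧ α 0 ≤ ρ₂ ∧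
      ∀ i : Fin (p + 1), i ≠ 0 → ρ₁ ≤ α i}

/-- the vector `a_u = (a_0(u),…,a_p(u))`. -/
def aVec (a : ℕ → ℝ → ℝ) (p : ℕ) (u : ℝ) : Fin (p + 1) → ℝ := fun i => a i u

/-- Assumption 2(iii). -/
structure Assumption2iii (a : ℕ → ℝ → ℝ) (p : ℕ) (ρ₁ ρ₂ : ℝ) : Prop where
  ρ₁_pos : 0 < ρ₁
  ρ₁_le_ρ₂ : ρ₁ ≤ ρ₂
  mem_int : ∀ u ∈ Set.Ioc (0 : ℝ) 1, aVec a p u ∈ interior (OmegaSet p ρ₁ ρ₂)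

/-- `w_{k,N}(α)` resp. `w̃_k(u₀,α)`, built from a given squared process. -/
def wLik {Ω : Type*} (p : ℕ) (α : Fin (p + 1) → ℝ) (X2 : ℤ → Ω → ℝ) (k : ℤ) (ω : Ω) : ℝ :=
  α 0 + ∑ i ∈ Finset.univ.erase (0 : Fin (p + 1)), α i * X2 (k - (i : ℕ)) ω

/-- `∇w_k(α)_i` (gradient of `wLik` in α). -/
def gradw {Ω : Type*} (p : ℕ) (X2 : ℤ → Ω → ℝ) (k : ℤ) (i : Fin (p + 1)) (ω : Ω) : ℝ :=
  if i = 0 then 1 else X2 (k - (i : ℕ)) ω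

/-- the quasi-likelihood summand `ℓ_{k}(α) = ½(log w + X²/w)`. -/
def likTerm {Ω : Type*} (p : ℕ) (α : Fin (p + 1) → ℝ) (X2 : ℤ → Ω → ℝ) (k : ℤ) (ω : Ω) : ℝ :=
  (Real.log (wLik p α X2 k ω) + X2 k ω / wLik p α X2 k ω) / 2

/-- `∇ℓ_k(α)_i`. -/
def gradLikTerm {Ω : Type*} (p : ℕ) (α : Fin (p + 1) → ℝ) (X2 : ℤ → Ω → ℝ) (k : ℤ)
    (i : Fin (p + 1)) (ω : Ω) : ℝ :=
  (gradw p X2 k i ω / wLik p α X2 k ω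
    - X2 k ω * gradw p X2 k i ω / (wLik p α X2 k ω) ^ 2) / 2

/-- `∇²ℓ_k(α)_{ij}`. -/
def hessLikTerm {Ω : Type*} (p : ℕ) (α : Fin (p + 1) → ℝ) (X2 : ℤ → Ω → ℝ) (k : ℤ)
    (i j : Fin (p + 1)) (ω : Ω) : ℝ :=
  (-(gradw p X2 k i ω * gradw p X2 k j ω) / (wLik p α X2 k ω) ^ 2
    + 2 * X2 k ω * gradw p X2 k i ω * gradw p X2 k j ω / (wLik p α X2 k ω) ^ 3) / 2

/-- localized kernel sum `Σ_{k=p+1}^N (1/(bN)) W((t₀−k)/(bN)) f_k`. -/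
def kernSum {Ω : Type*} (W : ℝ → ℝ) (b : ℝ) (N : ℕ) (t₀ : ℕ) (p : ℕ)
    (f : ℤ → Ω → ℝ) (ω : Ω) : ℝ :=
  ∑ k ∈ Finset.Icc (p + 1) N, (1 / (b * N)) * W (((t₀ : ℝ) - k) / (b * N)) * f k ω

/-- the shift on two-sided real sequences. -/
def seqShift : (ℤ → ℝ) → (ℤ → ℝ) := fun x t => x (t + 1)

/-
The Volterra series is first read as an `ℝ≥0∞`-valued series, where it can be rearranged freely.
Splitting off the first gap `j_0 - j_1` of every index tuple turns it into the tvARCH recursion,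
pointwise. Since `Z_t²` is independent of the past and has mean one, every monomial
`Π_i Z_{j_i}²` has mean one, so the mean of the series is `Σ_k Σ_j g_{t,N}(k, j)`, which is at most
`sup a_0 · Σ_k (1 - ν)^k` because `Σ_j a_j(u) ≤ Q Σ_j 1/ℓ(j) ≤ 1 - ν`. Hence the series is a.s.
finite, and there it agrees with the real one. For uniqueness, the same independence applied to
the recursion of `|Y_t - X_t|` gives `E|Y_t - X_t| ≤ (1 - ν) sup_s E|Y_s - X_s|`, and a finite
supremum bounded by `(1 - ν)` times itself vanishes.
-/

section VolterraIndex

lemma volIdx_zero (t : ℤ) {k : ℕ} (d : Fin k → ℕ+) : volIdx t d 0 = t := by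
  simp [volIdx]

lemma volIdx_le (t : ℤ) {k : ℕ} (d : Fin k → ℕ+) (i : ℕ) : volIdx t d i ≤ t := by
  have : (0 : ℤ) ≤ ∑ s ∈ Finset.univ.filter (fun s : Fin k => (s : ℕ) < i), ((d s : ℕ) : ℤ) :=
    Finset.sum_nonneg fun s _ => by positivity
  simp only [volIdx]
  omega

lemma volIdx_cons (t : ℤ) (j : ℕ+) {k : ℕ} (d : Fin k → ℕ+) (i : ℕ) :
    volIdx t (Fin.cons j d) (i + 1) = volIdx (t - ((j : ℕ) : ℤ)) d i := by
  unfold volIdx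
  rw [Finset.sum_filter, Finset.sum_filter, Fin.sum_univ_succ]
  simp only [Fin.cons_zero, Fin.cons_succ, Fin.val_zero, Fin.val_succ,
    Nat.zero_lt_succ, if_true, Nat.succ_lt_succ_iff]
  ring

lemma volZprod_cons {Ω : Type*} (Z : ℤ → Ω → ℝ) (t : ℤ) (j : ℕ+) {k : ℕ} (d : Fin k → ℕ+)
    (ω : Ω) :
    volZprod Z t (Fin.cons j d) ω = (Z t ω) ^ 2 * volZprod Z (t - ((j : ℕ) : ℤ)) d ω := by
  unfold volZprod
  rw [Finset.prod_range_succ']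
  simp only [volIdx_cons, volIdx_zero]
  ring

lemma volCoef_cons (a : ℕ → ℝ → ℝ) (N : ℕ) (t : ℤ) (j : ℕ+) {k : ℕ} (d : Fin k → ℕ+) :
    volCoef a N t (Fin.cons j d) =
      a (j : ℕ) ((t : ℝ) / N) * volCoef a N (t - ((j : ℕ) : ℤ)) d := by
  simp only [volCoef, Fin.prod_univ_succ, Fin.cons_zero, Fin.cons_succ, Fin.val_zero,
    Fin.val_succ, volIdx_zero, volIdx_cons]
  ring

lemma volZprod_of_fin_zero {Ω : Type*} (Z : ℤ → Ω → ℝ) (t : ℤ) (d : Fin 0 → ℕ+) (ω : Ω) :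
    volZprod Z t d ω = (Z t ω) ^ 2 := by
  simp [volZprod, volIdx_zero]

lemma volCoef_of_fin_zero (a : ℕ → ℝ → ℝ) (N : ℕ) (t : ℤ) (d : Fin 0 → ℕ+) :
    volCoef a N t d = a 0 ((t : ℝ) / N) := by
  simp [volCoef, volIdx_zero]

lemma volZprod_nonneg {Ω : Type*} (Z : ℤ → Ω → ℝ) (t : ℤ) {k : ℕ} (d : Fin k → ℕ+) (ω : Ω) :
    0 ≤ volZprod Z t d ω :=
  Finset.prod_nonneg fun _ _ => sq_nonneg _

lemma volCoef_nonneg {a : ℕ → ℝ → ℝ} (ha : ∀ j u, 0 ≤ a j u) (N : ℕ) (t : ℤ) {k : ℕ}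
    (d : Fin k → ℕ+) : 0 ≤ volCoef a N t d :=
  mul_nonneg (ha _ _) (Finset.prod_nonneg fun _ _ => ha _ _)

end VolterraIndex

section Series

lemma ENNReal.tsum_prod_fin_eq_pow {ι : Type*} (f : ι → ℝ≥0∞) (n : ℕ) :
    ∑' d : Fin n → ι, ∏ i, f (d i) = (∑' j, f j) ^ n := by
  induction n with
  | zero => simp
  | succ n ih =>
    rw [← (Fin.consEquiv fun _ : Fin (n + 1) => ι).tsum_eq, ENNReal.tsum_prod', pow_succ',
      ← ih, ← ENNReal.tsum_mul_right]
    refine tsum_congr fun j => ?_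
    simp [Fin.consEquiv, Fin.prod_univ_succ, ENNReal.tsum_mul_left]

lemma tsum_eq_toReal_tsum_ofReal {ι : Type*} {f : ι → ℝ} (hf : ∀ i, 0 ≤ f i) :
    ∑' i, f i = (∑' i, ENNReal.ofReal (f i)).toReal := by
  rw [ENNReal.tsum_toReal_eq fun _ => ENNReal.ofReal_ne_top]
  exact tsum_congr fun i => (ENNReal.toReal_ofReal (hf i)).symm

lemma summable_of_tsum_ofReal_ne_top {ι : Type*} {f : ι → ℝ} (hf : ∀ i, 0 ≤ f i)
    (h : ∑' i, ENNReal.ofReal (f i) ≠ ∞) : Summable f :=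
  (ENNReal.summable_toReal h).congr fun i => ENNReal.toReal_ofReal (hf i)

lemma Measurable.tsum_of_nonneg {α ι : Type*} {_ : MeasurableSpace α} [Countable ι]
    {f : ι → α → ℝ} (hf : ∀ i, Measurable (f i)) (hnn : ∀ i x, 0 ≤ f i x) :
    Measurable fun x => ∑' i, f i x := by
  simp only [tsum_eq_toReal_tsum_ofReal (hnn · _)]
  have := fun i => (hf i).ennreal_ofReal
  fun_prop

lemma ofReal_abs_tsum_sub_tsum_le {ι : Type*} {c y x : ι → ℝ} (hc : ∀ i, 0 ≤ c i)
    (hy : Summable fun i => c i * y i) (hx : Summable fun i => c i * x i) :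
    ENNReal.ofReal |∑' i, c i * y i - ∑' i, c i * x i| ≤
      ∑' i, ENNReal.ofReal (c i) * ENNReal.ofReal |y i - x i| := by
  rw [← hy.tsum_sub hx, ← Real.enorm_eq_ofReal_abs]
  refine enorm_tsum_le_tsum_enorm.trans_eq (tsum_congr fun i => ?_)
  rw [← mul_sub, enorm_mul, Real.enorm_eq_ofReal (hc i), Real.enorm_eq_ofReal_abs]

lemma ENNReal.eq_zero_of_le_mul_of_lt_one {x r : ℝ≥0∞} (h : x ≤ r * x) (hr : r < 1)
    (hx : x ≠ ∞) : x = 0 := by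
  by_contra h0
  have : r * x < 1 * x := ENNReal.mul_lt_mul_left h0 hx hr
  exact (h.trans_lt this).ne (one_mul x).symm

variable {Ω : Type*} [MeasurableSpace Ω] {μ : Measure Ω}

lemma ae_summable_mul_of_lintegral_le {ι : Type*} [Countable ι] {c : ι → ℝ}
    (hc : ∀ i, 0 ≤ c i) (hcs : Summable c) {W : ι → Ω → ℝ} (hW : ∀ i, AEMeasurable (W i) μ)
    (hWnn : ∀ i, ∀ᵐ ω ∂μ, 0 ≤ W i ω) {C : ℝ≥0∞} (hC : C ≠ ∞)
    (hWC : ∀ i, ∫⁻ ω, ENNReal.ofReal (W i ω) ∂μ ≤ C) :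
    ∀ᵐ ω ∂μ, Summable fun i => c i * W i ω := by
  have hmeas : ∀ i, AEMeasurable (fun ω => ENNReal.ofReal (c i) * ENNReal.ofReal (W i ω)) μ :=
    fun i => (hW i).ennreal_ofReal.const_mul _
  have hfin : ∫⁻ ω, ∑' i, ENNReal.ofReal (c i) * ENNReal.ofReal (W i ω) ∂μ ≠ ∞ := by
    rw [lintegral_tsum hmeas]
    refine ne_top_of_le_ne_top (ENNReal.mul_ne_top hcs.tsum_ofReal_ne_top hC) ?_
    rw [← ENNReal.tsum_mul_right]
    exact ENNReal.tsum_le_tsum fun i =>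
      (lintegral_const_mul'' _ (hW i).ennreal_ofReal).trans_le (mul_le_mul_right (hWC i) _)
  filter_upwards [ae_lt_top' (by fun_prop) hfin, ae_all_iff.mpr hWnn] with ω hω hnn
  refine summable_of_tsum_ofReal_ne_top (fun i => mul_nonneg (hc i) (hnn i)) ?_
  simpa only [ENNReal.ofReal_mul (hc _)] using hω.ne

end Series

section Noise

abbrev pastSigma {Ω : Type*} (Z : ℤ → Ω → ℝ) (t : ℤ) : MeasurableSpace Ω :=
  ⨆ s : {s : ℤ // s ≤ t}, MeasurableSpace.comap (Z (s : ℤ)) inferInstance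

variable {Ω : Type*} {Z : ℤ → Ω → ℝ}

lemma measurable_pastSigma_of_le {s t : ℤ} (h : s ≤ t) : Measurable[pastSigma Z t] (Z s) :=
  measurable_iff_comap_le.mpr (le_iSup_of_le (⟨s, h⟩ : {s : ℤ // s ≤ t}) le_rfl)

lemma pastSigma_mono {s t : ℤ} (h : s ≤ t) : pastSigma Z s ≤ pastSigma Z t :=
  iSup_le fun r => le_iSup_of_le (⟨r, r.2.trans h⟩ : {s : ℤ // s ≤ t}) le_rfl

lemma pastSigma_le [MeasurableSpace Ω] (hZ : ∀ t, Measurable (Z t)) (t : ℤ) :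
    pastSigma Z t ≤ ‹MeasurableSpace Ω› :=
  iSup_le fun r => (hZ r).comap_le

lemma measurable_pastSigma_volZprod (t : ℤ) {k : ℕ} (d : Fin k → ℕ+) :
    Measurable[pastSigma Z t] (volZprod Z t d) :=
  Finset.measurable_prod _ fun i _ => (measurable_pastSigma_of_le (volIdx_le t d i)).pow_const 2

lemma indep_pastSigma_comap [MeasurableSpace Ω] {μ : Measure Ω} [IsProbabilityMeasure μ]
    (hZm : ∀ t, Measurable (Z t)) (hZi : iIndepFun Z μ) {s t : ℤ} (h : s < t) :
    Indep (pastSigma Z s) (MeasurableSpace.comap (Z t) inferInstance) μ := by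
  have hdisj : Disjoint {r : ℤ | r ≤ s} {t} := by simpa using h
  have H := indep_iSup_of_disjoint (fun r => (hZm r).comap_le) hZi.iIndep hdisj
  rwa [iSup_singleton, iSup_subtype'] at H

variable [MeasureSpace Ω]

lemma lintegral_ofReal_sq (hZ : IIDNoise Z) (t : ℤ) :
    ∫⁻ ω, ENNReal.ofReal ((Z t ω) ^ 2) ∂ℙ = 1 := by
  have hid : IdentDistrib (fun ω => ENNReal.ofReal ((Z t ω) ^ 2))
      (fun ω => ENNReal.ofReal ((Z 0 ω) ^ 2)) ℙ ℙ :=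
    (hZ.ident t).comp (ENNReal.measurable_ofReal.comp (measurable_id.pow_const 2))
  rw [hid.lintegral_eq, ← ofReal_integral_eq_lintegral_ofReal hZ.sq_integrable
    (ae_of_all _ fun ω => sq_nonneg _), hZ.var_one, ENNReal.ofReal_one]

lemma lintegral_mul_ofReal_sq [IsProbabilityMeasure (ℙ : Measure Ω)] (hZ : IIDNoise Z)
    {s t : ℤ} (h : s < t) {f : Ω → ℝ≥0∞} (hf : Measurable[pastSigma Z s] f) :
    ∫⁻ ω, f ω * ENNReal.ofReal ((Z t ω) ^ 2) ∂ℙ = ∫⁻ ω, f ω ∂ℙ := by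
  have hg : Measurable[MeasurableSpace.comap (Z t) inferInstance]
      fun ω => ENNReal.ofReal ((Z t ω) ^ 2) :=
    ((comap_measurable (Z t)).pow_const 2).ennreal_ofReal
  have hind : IndepFun f (fun ω => ENNReal.ofReal ((Z t ω) ^ 2)) ℙ :=
    indep_of_indep_of_le_right
      (indep_of_indep_of_le_left (indep_pastSigma_comap hZ.meas hZ.indep h) hf.comap_le)
      hg.comap_le
  rw [← Pi.mul_def, lintegral_mul_eq_lintegral_mul_lintegral_of_indepFun
    (hf.mono (pastSigma_le hZ.meas s) le_rfl) (hg.mono (hZ.meas t).comap_le le_rfl) hind,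
    lintegral_ofReal_sq hZ t, mul_one]

lemma lintegral_ofReal_volZprod [IsProbabilityMeasure (ℙ : Measure Ω)] (hZ : IIDNoise Z)
    {k : ℕ} (t : ℤ) (d : Fin k → ℕ+) :
    ∫⁻ ω, ENNReal.ofReal (volZprod Z t d ω) ∂ℙ = 1 := by
  induction k generalizing t with
  | zero => simpa only [volZprod_of_fin_zero] using lintegral_ofReal_sq hZ t
  | succ k ih =>
    cases d using Fin.consCases with
    | cons j d =>
      have hlt : t - ((j : ℕ) : ℤ) < t := by have := j.pos; omega
      simp_rw [volZprod_cons, ENNReal.ofReal_mul (sq_nonneg _),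
        mul_comm (ENNReal.ofReal ((Z t _) ^ 2))]
      rw [lintegral_mul_ofReal_sq hZ hlt (measurable_pastSigma_volZprod _ d).ennreal_ofReal, ih]

lemma lintegral_eq_zero_of_le_tsum_mul_sq [IsProbabilityMeasure (ℙ : Measure Ω)]
    (hZ : IIDNoise Z) {D : ℤ → Ω → ℝ≥0∞} (hD : ∀ s, Measurable[pastSigma Z s] (D s))
    {C : ℝ≥0∞} (hC : C ≠ ∞) (hDC : ∀ s, ∫⁻ ω, D s ω ∂ℙ ≤ C) {c : ℤ → ℕ+ → ℝ≥0∞} {r : ℝ≥0∞} (hr : r < 1)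
    (hc : ∀ s, ∑' j, c s j ≤ r)
    (hDrec : ∀ s, ∀ᵐ ω ∂ℙ,
      D s ω ≤ (∑' j : ℕ+, c s j * D (s - (j : ℕ)) ω) * ENNReal.ofReal ((Z s ω) ^ 2))
    (t : ℤ) : ∫⁻ ω, D t ω ∂ℙ = 0 := by
  set S := ⨆ s, ∫⁻ ω, D s ω ∂ℙ
  have hDm : ∀ s, Measurable (D s) := fun s => (hD s).mono (pastSigma_le hZ.meas s) le_rfl
  have hstep : ∀ s, ∫⁻ ω, D s ω ∂ℙ ≤ r * S := by
    intro s
    have hG : Measurable[pastSigma Z (s - 1)] fun ω => ∑' j : ℕ+, c s j * D (s - (j : ℕ)) ω := by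
      have := fun j : ℕ+ => ((hD (s - (j : ℕ))).mono (pastSigma_mono (s := s - (j : ℕ))
        (t := s - 1) (by have := j.pos; omega)) le_rfl).const_mul (c s j)
      fun_prop
    calc ∫⁻ ω, D s ω ∂ℙ
        ≤ ∫⁻ ω, (∑' j : ℕ+, c s j * D (s - (j : ℕ)) ω) * ENNReal.ofReal ((Z s ω) ^ 2) ∂ℙ :=
          lintegral_mono_ae (hDrec s)
      _ = ∑' j : ℕ+, c s j * ∫⁻ ω, D (s - (j : ℕ)) ω ∂ℙ := by
          rw [lintegral_mul_ofReal_sq hZ (by omega) hG,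
            lintegral_tsum fun j => ((hDm _).const_mul _).aemeasurable]
          exact tsum_congr fun j => lintegral_const_mul _ (hDm _)
      _ ≤ (∑' j, c s j) * S := by
          rw [← ENNReal.tsum_mul_right]
          exact ENNReal.tsum_le_tsum fun j =>
            mul_le_mul_right (le_iSup (fun s => ∫⁻ ω, D s ω ∂ℙ) _) _
      _ ≤ r * S := mul_le_mul_left (hc s) S
  have hS : S = 0 := ENNReal.eq_zero_of_le_mul_of_lt_one (iSup_le hstep) hr
    (ne_top_of_le_ne_top hC (iSup_le hDC))
  exact nonpos_iff_eq_zero.mp (hS ▸ le_iSup (fun s => ∫⁻ ω, D s ω ∂ℙ) t)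

end Noise

def volMeanBound (a : ℕ → ℝ → ℝ) (ν : ℝ) : ℝ :=
  sSup (Set.range (a 0)) * (1 + ∑' k : ℕ, (1 - ν) ^ (k + 1))

namespace Assumption1

variable {a : ℕ → ℝ → ℝ} {ρ Q M ν : ℝ} {ℓ : ℕ → ℝ}

lemma sSup_a0_nonneg (hA1 : Assumption1 a ρ Q M ν ℓ) (hbdd : BddAbove (Set.range (a 0))) :
    0 ≤ sSup (Set.range (a 0)) :=
  (hA1.a_nonneg 0 0).trans (le_csSup hbdd ⟨0, rfl⟩)

lemma a_le_div (hA1 : Assumption1 a ρ Q M ν ℓ) (j : ℕ+) (u : ℝ) :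
    a (j : ℕ) u ≤ Q / ℓ (j : ℕ) := by
  rcases lt_or_ge u 0 with hu | hu
  · rw [hA1.a_causal _ u hu]
    exact div_nonneg hA1.Q_pos.le (hA1.ℓ_pos _ j.pos).le
  · exact hA1.a_upper _ j.pos u

lemma summable_div (hA1 : Assumption1 a ρ Q M ν ℓ) : Summable fun j : ℕ+ => Q / ℓ (j : ℕ) := by
  simpa only [mul_one_div] using hA1.summable_inv.mul_left Q

lemma tsum_div_le (hA1 : Assumption1 a ρ Q M ν ℓ) : ∑' j : ℕ+, Q / ℓ (j : ℕ) ≤ 1 - ν := by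
  simpa only [← tsum_mul_left, mul_one_div] using hA1.sum_bound

lemma summable_a (hA1 : Assumption1 a ρ Q M ν ℓ) (u : ℝ) :
    Summable fun j : ℕ+ => a (j : ℕ) u :=
  hA1.summable_div.of_nonneg_of_le (fun _ => hA1.a_nonneg _ _) (hA1.a_le_div · u)

lemma tsum_ofReal_div_le (hA1 : Assumption1 a ρ Q M ν ℓ) :
    ∑' j : ℕ+, ENNReal.ofReal (Q / ℓ (j : ℕ)) ≤ ENNReal.ofReal (1 - ν) := by
  rw [← ENNReal.ofReal_tsum_of_nonneg (fun j => div_nonneg hA1.Q_pos.le (hA1.ℓ_pos _ j.pos).le)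
    hA1.summable_div]
  exact ENNReal.ofReal_le_ofReal hA1.tsum_div_le

lemma tsum_ofReal_a_le (hA1 : Assumption1 a ρ Q M ν ℓ) (u : ℝ) :
    ∑' j : ℕ+, ENNReal.ofReal (a (j : ℕ) u) ≤ ENNReal.ofReal (1 - ν) :=
  (ENNReal.tsum_le_tsum fun j => ENNReal.ofReal_le_ofReal (hA1.a_le_div j u)).trans
    hA1.tsum_ofReal_div_le

lemma tsum_ofReal_volCoef_le (hA1 : Assumption1 a ρ Q M ν ℓ) (hbdd : BddAbove (Set.range (a 0)))
    (N : ℕ) (t : ℤ) (k : ℕ) :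
    ∑' d : Fin k → ℕ+, ENNReal.ofReal (volCoef a N t d) ≤
      ENNReal.ofReal (sSup (Set.range (a 0))) * ENNReal.ofReal (1 - ν) ^ k := by
  have hcoef : ∀ d : Fin k → ℕ+, ENNReal.ofReal (volCoef a N t d) ≤
      ENNReal.ofReal (sSup (Set.range (a 0))) * ∏ i, ENNReal.ofReal (Q / ℓ (d i : ℕ)) := by
    intro d
    rw [← ENNReal.ofReal_prod_of_nonneg fun i _ =>
      div_nonneg hA1.Q_pos.le (hA1.ℓ_pos _ (d i).pos).le,
      ← ENNReal.ofReal_mul (hA1.sSup_a0_nonneg hbdd)]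
    exact ENNReal.ofReal_le_ofReal (mul_le_mul (le_csSup hbdd ⟨_, rfl⟩)
      (Finset.prod_le_prod (fun _ _ => hA1.a_nonneg _ _) fun i _ => hA1.a_le_div (d i) _)
      (Finset.prod_nonneg fun _ _ => hA1.a_nonneg _ _) (hA1.sSup_a0_nonneg hbdd))
  calc ∑' d : Fin k → ℕ+, ENNReal.ofReal (volCoef a N t d)
      ≤ ∑' d : Fin k → ℕ+, ENNReal.ofReal (sSup (Set.range (a 0))) *
          ∏ i, ENNReal.ofReal (Q / ℓ (d i : ℕ)) := ENNReal.tsum_le_tsum hcoef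
    _ = ENNReal.ofReal (sSup (Set.range (a 0))) *
          (∑' j : ℕ+, ENNReal.ofReal (Q / ℓ (j : ℕ))) ^ k := by
      rw [ENNReal.tsum_mul_left,
        ENNReal.tsum_prod_fin_eq_pow fun j : ℕ+ => ENNReal.ofReal (Q / ℓ (j : ℕ))]
    _ ≤ _ := by gcongr; exact hA1.tsum_ofReal_div_le

lemma ofReal_volMeanBound (hA1 : Assumption1 a ρ Q M ν ℓ) (hbdd : BddAbove (Set.range (a 0))) :
    ENNReal.ofReal (volMeanBound a ν) =
      ENNReal.ofReal (sSup (Set.range (a 0))) * ∑' k : ℕ, ENNReal.ofReal (1 - ν) ^ k := by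
  have hν : 0 ≤ 1 - ν := by linarith [hA1.ν_lt_one]
  have hgeom : Summable fun k : ℕ => (1 - ν) ^ k :=
    summable_geometric_of_lt_one hν (by linarith [hA1.ν_pos])
  rw [volMeanBound, ENNReal.ofReal_mul (hA1.sSup_a0_nonneg hbdd)]
  simp_rw [← ENNReal.ofReal_pow hν]
  rw [← ENNReal.ofReal_tsum_of_nonneg (fun k => pow_nonneg hν k) hgeom, hgeom.tsum_eq_zero_add,
    pow_zero]

lemma volMeanBound_nonneg (hA1 : Assumption1 a ρ Q M ν ℓ) (hbdd : BddAbove (Set.range (a 0))) :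
    0 ≤ volMeanBound a ν := by
  have hν : 0 ≤ 1 - ν := by linarith [hA1.ν_lt_one]
  exact mul_nonneg (hA1.sSup_a0_nonneg hbdd)
    (add_nonneg zero_le_one (tsum_nonneg fun k => pow_nonneg hν _))

end Assumption1

section VolterraSeries

/-- Unlike in `volX2`, the term `a_0(t/N) Z_t²` is the summand of the tuple of length zero. -/
def volX2Ennreal {Ω : Type*} (a : ℕ → ℝ → ℝ) (Z : ℤ → Ω → ℝ) (N : ℕ) (t : ℤ) (ω : Ω) : ℝ≥0∞ :=
  ∑' kd : Σ k : ℕ, (Fin k → ℕ+),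
    ENNReal.ofReal (volCoef a N t kd.2) * ENNReal.ofReal (volZprod Z t kd.2 ω)

variable {Ω : Type*} {a : ℕ → ℝ → ℝ} {Z : ℤ → Ω → ℝ}

lemma tsum_ofReal_volCoef_mul_volZprod_succ (ha : ∀ j u, 0 ≤ a j u) (N : ℕ) (t : ℤ) (k : ℕ)
    (ω : Ω) :
    ∑' d : Fin (k + 1) → ℕ+,
        ENNReal.ofReal (volCoef a N t d) * ENNReal.ofReal (volZprod Z t d ω) =
      ∑' j : ℕ+, ENNReal.ofReal (a (j : ℕ) ((t : ℝ) / N)) * ENNReal.ofReal ((Z t ω) ^ 2) *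
        ∑' d : Fin k → ℕ+, ENNReal.ofReal (volCoef a N (t - ((j : ℕ) : ℤ)) d) *
          ENNReal.ofReal (volZprod Z (t - ((j : ℕ) : ℤ)) d ω) := by
  rw [← (Fin.consEquiv fun _ : Fin (k + 1) => ℕ+).tsum_eq, ENNReal.tsum_prod']
  refine tsum_congr fun j => ?_
  rw [← ENNReal.tsum_mul_left]
  refine tsum_congr fun d => ?_
  rw [show (Fin.consEquiv fun _ => ℕ+) (j, d) = Fin.cons j d from rfl]
  simp only [volCoef_cons, volZprod_cons, ENNReal.ofReal_mul (ha _ _),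
    ENNReal.ofReal_mul (sq_nonneg _)]
  ring

lemma volX2Ennreal_eq (ha : ∀ j u, 0 ≤ a j u) (N : ℕ) (t : ℤ) (ω : Ω) :
    volX2Ennreal a Z N t ω =
      (ENNReal.ofReal (a 0 ((t : ℝ) / N)) + ∑' j : ℕ+,
        ENNReal.ofReal (a (j : ℕ) ((t : ℝ) / N)) * volX2Ennreal a Z N (t - ((j : ℕ) : ℤ)) ω) *
        ENNReal.ofReal ((Z t ω) ^ 2) := by
  have hlevels : ∀ s, volX2Ennreal a Z N s ω = ∑' (k : ℕ) (d : Fin k → ℕ+),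
      ENNReal.ofReal (volCoef a N s d) * ENNReal.ofReal (volZprod Z s d ω) :=
    fun s => ENNReal.tsum_sigma' _
  simp_rw [hlevels]
  rw [tsum_eq_zero_add' ENNReal.summable]
  simp_rw [tsum_ofReal_volCoef_mul_volZprod_succ ha]
  rw [ENNReal.tsum_comm, add_mul, ← ENNReal.tsum_mul_right]
  simp_rw [ENNReal.tsum_mul_left]
  congr 1
  · simp [volCoef_of_fin_zero, volZprod_of_fin_zero]
  · exact tsum_congr fun j => by ring

lemma volX2_nonneg (ha : ∀ j u, 0 ≤ a j u) (N : ℕ) (t : ℤ) (ω : Ω) : 0 ≤ volX2 a Z N t ω :=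
  add_nonneg (mul_nonneg (ha _ _) (sq_nonneg _)) (tsum_nonneg fun _ => tsum_nonneg fun d =>
    mul_nonneg (volCoef_nonneg ha N t d) (volZprod_nonneg Z t d ω))

lemma measurable_pastSigma_volX2 (ha : ∀ j u, 0 ≤ a j u) (N : ℕ) (t : ℤ) :
    Measurable[pastSigma Z t] (volX2 a Z N t) := by
  refine (((measurable_pastSigma_of_le le_rfl).pow_const 2).const_mul _).add
    (Measurable.tsum_of_nonneg (fun k => Measurable.tsum_of_nonneg (fun d => ?_) fun d ω => ?_)
      fun k ω => tsum_nonneg fun d => ?_)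
  · exact (measurable_pastSigma_volZprod t d).const_mul _
  all_goals exact mul_nonneg (volCoef_nonneg ha N t d) (volZprod_nonneg Z t d ω)

lemma measurable_volX2 [MeasurableSpace Ω] (ha : ∀ j u, 0 ≤ a j u)
    (hZm : ∀ t, Measurable (Z t)) (N : ℕ) (t : ℤ) : Measurable (volX2 a Z N t) :=
  (measurable_pastSigma_volX2 ha N t).mono (pastSigma_le hZm t) le_rfl

lemma measurable_pastSigma_volX2Ennreal (N : ℕ) (t : ℤ) :
    Measurable[pastSigma Z t] (volX2Ennreal a Z N t) := by
  have := fun kd : Σ k : ℕ, (Fin k → ℕ+) =>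
    (measurable_pastSigma_volZprod (Z := Z) t kd.2).ennreal_ofReal.const_mul
      (ENNReal.ofReal (volCoef a N t kd.2))
  unfold volX2Ennreal
  fun_prop

lemma summable_of_volX2Ennreal_ne_top (ha : ∀ j u, 0 ≤ a j u) {N : ℕ} {t : ℤ} {ω : Ω}
    (h : volX2Ennreal a Z N t ω ≠ ∞) :
    Summable fun kd : Σ k : ℕ, (Fin k → ℕ+) => volCoef a N t kd.2 * volZprod Z t kd.2 ω :=
  summable_of_tsum_ofReal_ne_top
    (fun kd => mul_nonneg (volCoef_nonneg ha N t kd.2) (volZprod_nonneg Z t kd.2 ω))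
    (by simpa only [volX2Ennreal, ENNReal.ofReal_mul (volCoef_nonneg ha N t _)] using h)

lemma volX2_eq_tsum {N : ℕ} {t : ℤ} {ω : Ω}
    (hs : Summable fun kd : Σ k : ℕ, (Fin k → ℕ+) => volCoef a N t kd.2 * volZprod Z t kd.2 ω) :
    volX2 a Z N t ω =
      ∑' kd : Σ k : ℕ, (Fin k → ℕ+), volCoef a N t kd.2 * volZprod Z t kd.2 ω := by
  rw [hs.tsum_sigma, hs.sigma.tsum_eq_zero_add, volX2]
  dsimp only
  congr 1
  simp [volCoef_of_fin_zero, volZprod_of_fin_zero]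

lemma ofReal_volX2_eq_volX2Ennreal (ha : ∀ j u, 0 ≤ a j u) {N : ℕ} {t : ℤ} {ω : Ω}
    (h : volX2Ennreal a Z N t ω ≠ ∞) :
    ENNReal.ofReal (volX2 a Z N t ω) = volX2Ennreal a Z N t ω := by
  have hs := summable_of_volX2Ennreal_ne_top ha h
  have hnn : ∀ kd : Σ k : ℕ, (Fin k → ℕ+), 0 ≤ volCoef a N t kd.2 * volZprod Z t kd.2 ω :=
    fun kd => mul_nonneg (volCoef_nonneg ha N t kd.2) (volZprod_nonneg Z t kd.2 ω)
  rw [volX2_eq_tsum hs, ENNReal.ofReal_tsum_of_nonneg hnn hs]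
  exact tsum_congr fun kd => ENNReal.ofReal_mul (volCoef_nonneg ha N t kd.2)

variable [MeasureSpace Ω] [IsProbabilityMeasure (ℙ : Measure Ω)]

lemma lintegral_volX2Ennreal (hZ : IIDNoise Z) (N : ℕ) (t : ℤ) :
    ∫⁻ ω, volX2Ennreal a Z N t ω ∂ℙ =
      ∑' kd : Σ k : ℕ, (Fin k → ℕ+), ENNReal.ofReal (volCoef a N t kd.2) := by
  have hmeas : ∀ kd : Σ k : ℕ, (Fin k → ℕ+),
      Measurable fun ω => ENNReal.ofReal (volZprod Z t kd.2 ω) := fun kd =>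
    ((measurable_pastSigma_volZprod t kd.2).mono (pastSigma_le hZ.meas t) le_rfl).ennreal_ofReal
  unfold volX2Ennreal
  rw [lintegral_tsum fun kd => ((hmeas kd).const_mul _).aemeasurable]
  exact tsum_congr fun kd => by
    rw [lintegral_const_mul _ (hmeas kd), lintegral_ofReal_volZprod hZ, mul_one]

variable {ρ Q M ν : ℝ} {ℓ : ℕ → ℝ}

lemma lintegral_volX2Ennreal_le (hA1 : Assumption1 a ρ Q M ν ℓ) (hZ : IIDNoise Z)
    (hbdd : BddAbove (Set.range (a 0))) (N : ℕ) (t : ℤ) :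
    ∫⁻ ω, volX2Ennreal a Z N t ω ∂ℙ ≤ ENNReal.ofReal (volMeanBound a ν) := by
  rw [lintegral_volX2Ennreal hZ, hA1.ofReal_volMeanBound hbdd, ENNReal.tsum_sigma',
    ← ENNReal.tsum_mul_left]
  exact ENNReal.tsum_le_tsum (hA1.tsum_ofReal_volCoef_le hbdd N t)

lemma ae_volX2Ennreal_lt_top (hA1 : Assumption1 a ρ Q M ν ℓ) (hZ : IIDNoise Z)
    (hbdd : BddAbove (Set.range (a 0))) (N : ℕ) (t : ℤ) :
    ∀ᵐ ω ∂ℙ, volX2Ennreal a Z N t ω < ∞ :=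
  ae_lt_top ((measurable_pastSigma_volX2Ennreal N t).mono (pastSigma_le hZ.meas t) le_rfl)
    (ne_top_of_le_ne_top ENNReal.ofReal_ne_top (lintegral_volX2Ennreal_le hA1 hZ hbdd N t))

lemma lintegral_ofReal_volX2_le (hA1 : Assumption1 a ρ Q M ν ℓ) (hZ : IIDNoise Z)
    (hbdd : BddAbove (Set.range (a 0))) (N : ℕ) (t : ℤ) :
    ∫⁻ ω, ENNReal.ofReal (volX2 a Z N t ω) ∂ℙ ≤ ENNReal.ofReal (volMeanBound a ν) := by
  rw [lintegral_congr_ae ((ae_volX2Ennreal_lt_top hA1 hZ hbdd N t).mono fun ω hω =>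
    ofReal_volX2_eq_volX2Ennreal hA1.a_nonneg hω.ne)]
  exact lintegral_volX2Ennreal_le hA1 hZ hbdd N t

end VolterraSeries

section TvARCH

def tvarchRhs {Ω : Type*} (a : ℕ → ℝ → ℝ) (Z Y2 : ℤ → Ω → ℝ) (N : ℕ) (t : ℤ) (ω : Ω) : ℝ :=
  (a 0 ((t : ℝ) / N) + ∑' j : ℕ+, a (j : ℕ) ((t : ℝ) / N) * Y2 (t - (j : ℕ)) ω) * (Z t ω) ^ 2

variable {Ω : Type*} {a : ℕ → ℝ → ℝ} {Z : ℤ → Ω → ℝ}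

lemma ofReal_abs_tvarchRhs_sub_le (ha : ∀ j u, 0 ≤ a j u) {Y X : ℤ → Ω → ℝ} {N : ℕ} {t : ℤ}
    {ω : Ω} (hY : Summable fun j : ℕ+ => a (j : ℕ) ((t : ℝ) / N) * Y (t - (j : ℕ)) ω)
    (hX : Summable fun j : ℕ+ => a (j : ℕ) ((t : ℝ) / N) * X (t - (j : ℕ)) ω) :
    ENNReal.ofReal |tvarchRhs a Z Y N t ω - tvarchRhs a Z X N t ω| ≤
      (∑' j : ℕ+, ENNReal.ofReal (a (j : ℕ) ((t : ℝ) / N)) *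
        ENNReal.ofReal |Y (t - (j : ℕ)) ω - X (t - (j : ℕ)) ω|) * ENNReal.ofReal ((Z t ω) ^ 2) := by
  rw [tvarchRhs, tvarchRhs, ← sub_mul, add_sub_add_left_eq_sub, abs_mul,
    abs_of_nonneg (sq_nonneg (Z t ω)), ENNReal.ofReal_mul (abs_nonneg _)]
  exact mul_le_mul_left (ofReal_abs_tsum_sub_tsum_le (fun _ => ha _ _) hY hX) _

variable [MeasureSpace Ω] [IsProbabilityMeasure (ℙ : Measure Ω)] {ρ Q M ν : ℝ} {ℓ : ℕ → ℝ}

theorem ae_summable_volCoef_mul_volZprod (hA1 : Assumption1 a ρ Q M ν ℓ) (hZ : IIDNoise Z)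
    (hbdd : BddAbove (Set.range (a 0))) (N : ℕ) (t : ℤ) :
    ∀ᵐ ω ∂ℙ, Summable fun kd : Σ k : ℕ, (Fin (k + 1) → ℕ+) =>
      volCoef a N t kd.2 * volZprod Z t kd.2 ω := by
  filter_upwards [ae_volX2Ennreal_lt_top hA1 hZ hbdd N t] with ω hω
  exact (summable_of_volX2Ennreal_ne_top hA1.a_nonneg hω.ne).comp_injective
    (i := Sigma.map (· + 1) fun _ => id)
    ((add_left_injective 1).sigma_map fun _ => Function.injective_id)

theorem integral_volX2_le (hA1 : Assumption1 a ρ Q M ν ℓ) (hZ : IIDNoise Z)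
    (hbdd : BddAbove (Set.range (a 0))) (N : ℕ) (t : ℤ) :
    ∫ ω, volX2 a Z N t ω ∂ℙ ≤ volMeanBound a ν := by
  rw [integral_eq_lintegral_of_nonneg_ae (ae_of_all _ (volX2_nonneg hA1.a_nonneg N t))
    (measurable_volX2 hA1.a_nonneg hZ.meas N t).aestronglyMeasurable]
  exact ENNReal.toReal_le_of_le_ofReal (hA1.volMeanBound_nonneg hbdd)
    (lintegral_ofReal_volX2_le hA1 hZ hbdd N t)

lemma ae_summable_mul_volX2 (hA1 : Assumption1 a ρ Q M ν ℓ) (hZ : IIDNoise Z)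
    (hbdd : BddAbove (Set.range (a 0))) (N : ℕ) (t : ℤ) :
    ∀ᵐ ω ∂ℙ, Summable fun j : ℕ+ => a (j : ℕ) ((t : ℝ) / N) * volX2 a Z N (t - (j : ℕ)) ω :=
  ae_summable_mul_of_lintegral_le (fun _ => hA1.a_nonneg _ _) (hA1.summable_a _)
    (fun _ => (measurable_volX2 hA1.a_nonneg hZ.meas N _).aemeasurable)
    (fun _ => ae_of_all _ (volX2_nonneg hA1.a_nonneg N _)) ENNReal.ofReal_ne_top
    (fun _ => lintegral_ofReal_volX2_le hA1 hZ hbdd N _)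

theorem ae_volX2_eq_tvarchRhs (hA1 : Assumption1 a ρ Q M ν ℓ) (hZ : IIDNoise Z)
    (hbdd : BddAbove (Set.range (a 0))) (N : ℕ) (t : ℤ) :
    ∀ᵐ ω ∂ℙ, volX2 a Z N t ω = tvarchRhs a Z (volX2 a Z N) N t ω := by
  filter_upwards [ae_all_iff.mpr fun s => ae_volX2Ennreal_lt_top hA1 hZ hbdd N s,
    ae_summable_mul_volX2 hA1 hZ hbdd N t] with ω hfin hsum
  have hV : ∀ s, volX2Ennreal a Z N s ω = ENNReal.ofReal (volX2 a Z N s ω) := fun s =>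
    (ofReal_volX2_eq_volX2Ennreal hA1.a_nonneg (hfin s).ne).symm
  have hS : 0 ≤ ∑' j : ℕ+, a (j : ℕ) ((t : ℝ) / N) * volX2 a Z N (t - (j : ℕ)) ω :=
    tsum_nonneg fun _ => mul_nonneg (hA1.a_nonneg _ _) (volX2_nonneg hA1.a_nonneg N _ ω)
  rw [tvarchRhs, ← ENNReal.ofReal_eq_ofReal_iff (volX2_nonneg hA1.a_nonneg N t ω)
    (mul_nonneg (add_nonneg (hA1.a_nonneg _ _) hS) (sq_nonneg _)), ← hV,
    volX2Ennreal_eq hA1.a_nonneg, ENNReal.ofReal_mul (add_nonneg (hA1.a_nonneg _ _) hS),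
    ENNReal.ofReal_add (hA1.a_nonneg _ _) hS, ENNReal.ofReal_tsum_of_nonneg
      (fun _ => mul_nonneg (hA1.a_nonneg _ _) (volX2_nonneg hA1.a_nonneg N _ ω)) hsum]
  simp_rw [hV, ENNReal.ofReal_mul (hA1.a_nonneg _ _)]

lemma lintegral_ofReal_abs_sub_volX2_le (hA1 : Assumption1 a ρ Q M ν ℓ) (hZ : IIDNoise Z)
    (hbdd : BddAbove (Set.range (a 0))) (N : ℕ) (t : ℤ) {Y : Ω → ℝ} (hYm : Measurable Y)
    (hYnn : ∀ᵐ ω ∂ℙ, 0 ≤ Y ω) :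
    ∫⁻ ω, ENNReal.ofReal |Y ω - volX2 a Z N t ω| ∂ℙ ≤
      ∫⁻ ω, ENNReal.ofReal (Y ω) ∂ℙ + ENNReal.ofReal (volMeanBound a ν) := by
  calc ∫⁻ ω, ENNReal.ofReal |Y ω - volX2 a Z N t ω| ∂ℙ
      ≤ ∫⁻ ω, ENNReal.ofReal (Y ω) + ENNReal.ofReal (volX2 a Z N t ω) ∂ℙ := by
        refine lintegral_mono_ae (hYnn.mono fun ω hY => ?_)
        refine (ENNReal.ofReal_le_ofReal ?_).trans ENNReal.ofReal_add_le
        have := volX2_nonneg (Z := Z) hA1.a_nonneg N t ω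
        exact abs_sub_le_iff.mpr ⟨by linarith, by linarith⟩
    _ ≤ _ := by
        rw [lintegral_add_left hYm.ennreal_ofReal]
        gcongr
        exact lintegral_ofReal_volX2_le hA1 hZ hbdd N t

theorem ae_eq_volX2_of_eq_tvarchRhs (hA1 : Assumption1 a ρ Q M ν ℓ) (hZ : IIDNoise Z)
    (hbdd : BddAbove (Set.range (a 0))) (N : ℕ) {Y2 : ℤ → Ω → ℝ}
    (hYm : ∀ t, Measurable[pastSigma Z t] (Y2 t)) (hYnn : ∀ t, ∀ᵐ ω ∂ℙ, 0 ≤ Y2 t ω)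
    (hYint : ∀ t, Integrable (Y2 t) ℙ) (hYbdd : ∃ B : ℝ, ∀ t, ∫ ω, Y2 t ω ∂ℙ ≤ B)
    (hYeq : ∀ t, ∀ᵐ ω ∂ℙ, Y2 t ω = tvarchRhs a Z Y2 N t ω) (t : ℤ) :
    Y2 t =ᵐ[ℙ] volX2 a Z N t := by
  obtain ⟨B, hB⟩ := hYbdd
  have hYlint : ∀ s, ∫⁻ ω, ENNReal.ofReal (Y2 s ω) ∂ℙ ≤ ENNReal.ofReal B := fun s => by
    rw [← ofReal_integral_eq_lintegral_ofReal (hYint s) (hYnn s)]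
    exact ENNReal.ofReal_le_ofReal (hB s)
  have hYm' : ∀ s, Measurable (Y2 s) := fun s => (hYm s).mono (pastSigma_le hZ.meas s) le_rfl
  have hsumY : ∀ s : ℤ, ∀ᵐ ω ∂ℙ,
      Summable fun j : ℕ+ => a (j : ℕ) ((s : ℝ) / N) * Y2 (s - (j : ℕ)) ω := fun s =>
    ae_summable_mul_of_lintegral_le (fun _ => hA1.a_nonneg _ _) (hA1.summable_a _)
      (fun _ => (hYm' _).aemeasurable) (fun _ => hYnn _) ENNReal.ofReal_ne_top
      (fun _ => hYlint _)
  let D : ℤ → Ω → ℝ≥0∞ := fun s ω => ENNReal.ofReal |Y2 s ω - volX2 a Z N s ω|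
  have hD : ∀ s, Measurable[pastSigma Z s] (D s) := fun s =>
    (measurable_abs.comp ((hYm s).sub (measurable_pastSigma_volX2 hA1.a_nonneg N s))).ennreal_ofReal
  have hDC : ∀ s, ∫⁻ ω, D s ω ∂ℙ ≤ ENNReal.ofReal B + ENNReal.ofReal (volMeanBound a ν) :=
    fun s => (lintegral_ofReal_abs_sub_volX2_le hA1 hZ hbdd N s (hYm' s) (hYnn s)).trans
      (add_le_add_left (hYlint s) _)
  have hDrec : ∀ s : ℤ, ∀ᵐ ω ∂ℙ, D s ω ≤
      (∑' j : ℕ+, ENNReal.ofReal (a (j : ℕ) ((s : ℝ) / N)) * D (s - (j : ℕ)) ω) *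
        ENNReal.ofReal ((Z s ω) ^ 2) := fun s => by
    filter_upwards [hYeq s, ae_volX2_eq_tvarchRhs hA1 hZ hbdd N s, hsumY s,
      ae_summable_mul_volX2 hA1 hZ hbdd N s] with ω hY hX hsY hsX
    simp only [D]
    rw [hY, hX]
    exact ofReal_abs_tvarchRhs_sub_le hA1.a_nonneg hsY hsX
  have hD0 := lintegral_eq_zero_of_le_tsum_mul_sq hZ hD
    (ENNReal.add_ne_top.mpr ⟨ENNReal.ofReal_ne_top, ENNReal.ofReal_ne_top⟩) hDC
    (ENNReal.ofReal_lt_one.mpr (by linarith [hA1.ν_pos])) (fun s => hA1.tsum_ofReal_a_le _)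
    hDrec t
  filter_upwards [(lintegral_eq_zero_iff ((hD t).mono (pastSigma_le hZ.meas t) le_rfl)).mp hD0]
    with ω hω
  simpa [D, sub_eq_zero] using hω

end TvARCH

/-- under Assumption 1, the time-varying Volterra series converges almost
surely for every `t` and `N`, its expectation is bounded by
`sup_u a_0(u)·[1 + Σ_{k≥1}(1−ν)^k]` uniformly in `t` and `N`, it is a causal solution of
the tvARCH(∞) equations, and it is a.s. the unique causal solution among all causal
solutions with uniformly bounded means. Causality of a process is expressed as
measurability with respect to `σ(Z_t, Z_{t−1}, …)`. -/
theorem stmt_0 {Ωs : Type*} [MeasureSpace Ωs] [IsProbabilityMeasure (ℙ : Measure Ωs)]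
    (a : ℕ → ℝ → ℝ) (ρ Q M ν : ℝ) (ℓ : ℕ → ℝ) (Z : ℤ → Ωs → ℝ)
    (hA1 : Assumption1 a ρ Q M ν ℓ) (hZ : IIDNoise Z)
    (hbdd : BddAbove (Set.range (a 0))) :
    -- (a) the Volterra series converges almost surely
    (∀ N : ℕ, 1 ≤ N → ∀ t : ℤ, ∀ᵐ ω ∂ℙ,
      Summable (fun kd : Σ k : ℕ, (Fin (k + 1) → ℕ+) =>
        volCoef a N t kd.2 * volZprod Z t kd.2 ω)) ∧
    -- (b) uniform bound on the expectation
    (∀ N : ℕ, 1 ≤ N → ∀ t : ℤ,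
      ∫ ω, volX2 a Z N t ω ∂ℙ ≤
        sSup (Set.range (a 0)) * (1 + ∑' k : ℕ, (1 - ν) ^ (k + 1))) ∧
    -- (c) it is a causal solution of the tvARCH(∞) equations
    (∀ N : ℕ, 1 ≤ N → ∀ t : ℤ,
      (∀ᵐ ω ∂ℙ, volX2 a Z N t ω =
        (a 0 ((t : ℝ) / N) +
          ∑' j : ℕ+, a (j : ℕ) ((t : ℝ) / N) * volX2 a Z N (t - (j : ℕ)) ω) * (Z t ω) ^ 2) ∧
      Measurable[⨆ s : {s : ℤ // s ≤ t}, MeasurableSpace.comap (Z (s : ℤ)) inferInstance]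
        (volX2 a Z N t)) ∧
    -- (d) uniqueness in the set of all causal solutions (with uniformly bounded means)
    (∀ N : ℕ, 1 ≤ N → ∀ Y2 : ℤ → Ωs → ℝ,
      (∀ t : ℤ, Measurable[⨆ s : {s : ℤ // s ≤ t},
          MeasurableSpace.comap (Z (s : ℤ)) inferInstance] (Y2 t)) →
      (∀ t : ℤ, ∀ᵐ ω ∂ℙ, 0 ≤ Y2 t ω) →
      (∀ t : ℤ, Integrable (Y2 t) ℙ) →
      (∃ B : ℝ, ∀ t : ℤ, ∫ ω, Y2 t ω ∂ℙ ≤ B) →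
      (∀ t : ℤ, ∀ᵐ ω ∂ℙ, Y2 t ω =
        (a 0 ((t : ℝ) / N) +
          ∑' j : ℕ+, a (j : ℕ) ((t : ℝ) / N) * Y2 (t - (j : ℕ)) ω) * (Z t ω) ^ 2) →
      ∀ t : ℤ, Y2 t =ᵐ[ℙ] volX2 a Z N t) :=
  ⟨fun N _ t => ae_summable_volCoef_mul_volZprod hA1 hZ hbdd N t,
    fun N _ t => integral_volX2_le hA1 hZ hbdd N t,
    fun N _ t =>
      ⟨ae_volX2_eq_tvarchRhs hA1 hZ hbdd N t, measurable_pastSigma_volX2 hA1.a_nonneg N t⟩,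
    fun N _ _ hm hnn hint hB heq t =>
      ae_eq_volX2_of_eq_tvarchRhs hA1 hZ hbdd N hm hnn hint hB heq t⟩

end
end

section
/- Let ℓ : ℕ₊ → (0,∞), Q > 0 and 0 < ν < 1 satisfy Q Σ_{j≥1} 1/ℓ(j) ≤ 1−ν and L := Σ_{j≥1} j/ℓ(j) < ∞. Then for every t ∈ ℤ, Σ_{k=1}^∞ Σ_{j_k<⋯<j_1<j_0=t} k Q^{k−1} (j_0 − j_k) / Π_{i=1}^k ℓ(j_{i−1}−j_i) ≤ L Σ_{k=1}^∞ k² (1−ν)^{k−1} < ∞. -/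
open MeasureTheory ProbabilityTheory Filter Set
open scoped ENNReal NNReal Topology

noncomputable section

/-! Write `(Σ_i d_i) / Π_j ℓ(d_j) = Σ_i Π_j w_{ij}(d_j)` with `w_{ii}(x) = x/ℓ(x)` and
`w_{ij}(x) = 1/ℓ(x)` for `j ≠ i`. Each product then sums over all gap tuples to `L S^{k-1}`,
with `S = Σ_j 1/ℓ(j)`, so the `k`-th inner sum is exactly `k² Q^{k-1} L S^{k-1}`, and
`QS ≤ 1 − ν` bounds it by `L k² (1−ν)^{k-1}`, a summable majorant. -/

open Finset

theorem hasSum_fin_pi_prod_of_nonneg {β : Type*} {n : ℕ} {f : Fin n → β → ℝ} {a : Fin n → ℝ}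
    (hf : ∀ j x, 0 ≤ f j x) (ha : ∀ j, HasSum (f j) (a j)) :
    HasSum (fun d : Fin n → β => ∏ j, f j (d j)) (∏ j, a j) := by
  induction n with
  | zero => simp
  | succ n ih =>
    set g : (Fin n → β) → ℝ := fun d => ∏ j : Fin n, f j.succ (d j)
    have hg : HasSum g (∏ j : Fin n, a j.succ) := ih (fun j x => hf j.succ x) fun j => ha j.succ
    have hprod : HasSum (fun p : β × (Fin n → β) => f 0 p.1 * g p.2)
        (a 0 * ∏ j : Fin n, a j.succ) :=
      HasSum.mul (ha 0) hg <| (ha 0).summable.mul_of_nonneg hg.summable (hf 0)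
        fun d => prod_nonneg fun j _ => hf _ _
    rw [Fin.prod_univ_succ, ← (Fin.consEquiv fun _ => β).hasSum_iff]
    convert hprod using 2 with p
    rw [Function.comp_apply, Fin.prod_univ_succ]
    rfl

theorem hasSum_sum_mul_prod_of_nonneg {β : Type*} {u v : β → ℝ} {A S : ℝ}
    (hu : ∀ x, 0 ≤ u x) (hv : ∀ x, 0 ≤ v x) (hA : HasSum (fun x => u x * v x) A)
    (hS : HasSum v S) (n : ℕ) :
    HasSum (fun d : Fin (n + 1) → β => (∑ i, u (d i)) * ∏ j, v (d j)) ((n + 1) * A * S ^ n) := by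
  have single (i : Fin (n + 1)) :
      HasSum (fun d : Fin (n + 1) → β => u (d i) * ∏ j, v (d j)) (A * S ^ n) := by
    let w : Fin (n + 1) → β → ℝ := Function.update (fun _ => v) i fun x => u x * v x
    have hw : ∀ j x, 0 ≤ w j x := by
      intro j x
      by_cases h : j = i
      · subst h; simpa [w] using mul_nonneg (hu x) (hv x)
      · simpa [w, h] using hv x
    have hwsum : ∀ j, HasSum (w j) (Function.update (fun _ => S) i A j) := by
      intro j
      by_cases h : j = i
      · subst h; simpa [w] using hA
      · simpa [w, h] using hS
    convert hasSum_fin_pi_prod_of_nonneg hw hwsum using 1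
    · ext d
      rw [Fin.prod_univ_succAbove _ i, Fin.prod_univ_succAbove _ i]
      simp [w, mul_assoc]
    · rw [Fin.prod_univ_succAbove _ i]
      simp
  have := hasSum_sum (s := univ) fun i _ => single i
  simpa [sum_mul, mul_assoc] using this

theorem summable_succ_sq_mul_geometric {r : ℝ} (hr : ‖r‖ < 1) :
    Summable fun k : ℕ => ((k : ℝ) + 1) ^ 2 * r ^ k := by
  have h0 := summable_pow_mul_geometric_of_norm_lt_one 0 hr
  have h1 := summable_pow_mul_geometric_of_norm_lt_one 1 hr
  have h2 := summable_pow_mul_geometric_of_norm_lt_one 2 hr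
  exact ((h2.add (h1.mul_left 2)).add h0).congr fun k => by ring

theorem hasSum_mul_sum_div_prod {ℓ : ℕ+ → ℝ} (hℓ : ∀ j, 0 < ℓ j)
    (hL : Summable fun j : ℕ+ => ((j : ℕ) : ℝ) / ℓ j) (c : ℝ) (k : ℕ) :
    HasSum (fun d : Fin (k + 1) → ℕ+ => c * (∑ i, ((d i : ℕ) : ℝ)) / ∏ i, ℓ (d i))
      (c * ((k + 1) * (∑' j : ℕ+, ((j : ℕ) : ℝ) / ℓ j) * (∑' j : ℕ+, 1 / ℓ j) ^ k)) := by
  have hinv : Summable fun j : ℕ+ => 1 / ℓ j := by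
    refine hL.of_nonneg_of_le (fun j => (one_div_pos.2 (hℓ j)).le) fun j => ?_
    exact div_le_div_of_nonneg_right (Nat.one_le_cast.2 j.pos) (hℓ j).le
  have hA : HasSum (fun j : ℕ+ => ((j : ℕ) : ℝ) * (1 / ℓ j))
      (∑' j : ℕ+, ((j : ℕ) : ℝ) / ℓ j) := by
    simpa only [mul_one_div] using hL.hasSum
  have key := (hasSum_sum_mul_prod_of_nonneg (fun _ => Nat.cast_nonneg _)
    (fun j => (one_div_pos.2 (hℓ j)).le) hA hinv.hasSum k).mul_left c
  refine key.congr_fun fun d => ?_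
  simp only [prod_div_distrib, prod_const_one, mul_one_div, mul_div_assoc]

/-- The decreasing tuples `j_k < ⋯ < j_1 < j_0 = t` are parametrized by their gaps
`d : Fin k → ℕ+`, so that `j_0 − j_k = Σ_i d_i`; the outer index `k ≥ 1` is written as `k + 1`. -/
theorem stmt_3_general (ℓ : ℕ+ → ℝ) (Q ν : ℝ) (hQ : 0 < Q) (hν0 : 0 < ν)
    (hℓ : ∀ j : ℕ+, 0 < ℓ j)
    (hbound : Q * (∑' j : ℕ+, 1 / ℓ j) ≤ 1 - ν)
    (hL : Summable fun j : ℕ+ => ((j : ℕ) : ℝ) / ℓ j) :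
    ∀ _t : ℤ,
      Summable (fun kd : Σ k : ℕ, (Fin (k + 1) → ℕ+) =>
        ((kd.1 : ℝ) + 1) * Q ^ kd.1 * (∑ i, ((kd.2 i : ℕ) : ℝ)) / ∏ i, ℓ (kd.2 i)) ∧
      (∑' k : ℕ, ∑' d : Fin (k + 1) → ℕ+,
          ((k : ℝ) + 1) * Q ^ k * (∑ i, ((d i : ℕ) : ℝ)) / ∏ i, ℓ (d i))
        ≤ (∑' j : ℕ+, ((j : ℕ) : ℝ) / ℓ j) * ∑' k : ℕ, ((k : ℝ) + 1) ^ 2 * (1 - ν) ^ k ∧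
      Summable (fun k : ℕ => ((k : ℝ) + 1) ^ 2 * (1 - ν) ^ k) := by
  intro _t
  set S := ∑' j : ℕ+, 1 / ℓ j
  set L := ∑' j : ℕ+, ((j : ℕ) : ℝ) / ℓ j
  have hL0 : 0 ≤ L := tsum_nonneg fun j => div_nonneg (Nat.cast_nonneg _) (hℓ j).le
  have hS0 : 0 ≤ S := tsum_nonneg fun j => (one_div_pos.2 (hℓ j)).le
  have hQS : 0 ≤ Q * S := mul_nonneg hQ.le hS0
  have hgeom := summable_succ_sq_mul_geometric (r := 1 - ν) <| by
    rw [Real.norm_eq_abs, abs_lt]; constructor <;> linarith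
  have hinner (k : ℕ) := hasSum_mul_sum_div_prod hℓ hL (((k : ℝ) + 1) * Q ^ k) k
  have hle (k : ℕ) : ((k : ℝ) + 1) * Q ^ k * ((k + 1) * L * S ^ k)
      ≤ L * (((k : ℝ) + 1) ^ 2 * (1 - ν) ^ k) := by
    calc _ = L * ((k + 1) ^ 2 * (Q * S) ^ k) := by ring
      _ ≤ _ := by gcongr
  have hmajor : Summable fun k : ℕ => L * (((k : ℝ) + 1) ^ 2 * (1 - ν) ^ k) :=
    hgeom.mul_left L
  have hsum_inner : Summable fun k : ℕ => ((k : ℝ) + 1) * Q ^ k * ((k + 1) * L * S ^ k) :=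
    hmajor.of_nonneg_of_le (fun k => by have := hQ.le; positivity) hle
  refine ⟨?_, ?_, hgeom⟩
  · refine (summable_sigma_of_nonneg fun kd => div_nonneg (by have := hQ.le; positivity)
      (prod_nonneg fun i _ => (hℓ _).le)).2
      ⟨fun k => (hinner k).summable, ?_⟩
    simpa only [fun k => (hinner k).tsum_eq] using hsum_inner
  · calc _ = ∑' k : ℕ, ((k : ℝ) + 1) * Q ^ k * ((k + 1) * L * S ^ k) :=
          tsum_congr fun k => (hinner k).tsum_eq
      _ ≤ ∑' k : ℕ, L * (((k : ℝ) + 1) ^ 2 * (1 - ν) ^ k) :=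
          hsum_inner.tsum_le_tsum hle hmajor
      _ = L * ∑' k : ℕ, ((k : ℝ) + 1) ^ 2 * (1 - ν) ^ k := tsum_mul_left

/-- under `Q Σ 1/ℓ(j) ≤ 1−ν` and `L = Σ j/ℓ(j) < ∞`, for every `t`,
`Σ_{k=1}^∞ Σ_{j_k<⋯<j_0=t} k Q^{k−1} (j_0−j_k)/Π ℓ(j_{i−1}−j_i) ≤ L Σ_k k²(1−ν)^{k−1} < ∞`.
The inner sum over decreasing tuples is parametrized by the gaps `d : Fin k → ℕ₊`, the
outer index `k ≥ 1` is written as `k+1` with `k : ℕ`, and `j_0 − j_k = Σ_i d_i`. -/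
theorem stmt_3 (ℓ : ℕ+ → ℝ) (Q ν : ℝ) (hQ : 0 < Q) (hν0 : 0 < ν) (hν1 : ν < 1)
    (hℓ : ∀ j : ℕ+, 0 < ℓ j) (hsum : Summable fun j : ℕ+ => 1 / ℓ j)
    (hbound : Q * (∑' j : ℕ+, 1 / ℓ j) ≤ 1 - ν)
    (hL : Summable fun j : ℕ+ => ((j : ℕ) : ℝ) / ℓ j) :
    ∀ _t : ℤ,
      Summable (fun kd : Σ k : ℕ, (Fin (k + 1) → ℕ+) =>
        ((kd.1 : ℝ) + 1) * Q ^ kd.1 * (∑ i, ((kd.2 i : ℕ) : ℝ)) / ∏ i, ℓ (kd.2 i)) ∧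
      (∑' k : ℕ, ∑' d : Fin (k + 1) → ℕ+,
          ((k : ℝ) + 1) * Q ^ k * (∑ i, ((d i : ℕ) : ℝ)) / ∏ i, ℓ (d i))
        ≤ (∑' j : ℕ+, ((j : ℕ) : ℝ) / ℓ j) * ∑' k : ℕ, ((k : ℝ) + 1) ^ 2 * (1 - ν) ^ k ∧
      Summable (fun k : ℕ => ((k : ℝ) + 1) ^ 2 * (1 - ν) ^ k) :=
  stmt_3_general ℓ Q ν hQ hν0 hℓ hbound hL

end
end
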